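/- Let T be a convex spherical polytope in Sⁿ⁻¹ ⊆ ℝⁿ, H = {x : x₁ = 0}, and f = 𝟙_{int T} the indicator of the interior of T. Then for almost every point y = (y₂,…,yₙ) with (0,y₂,…,yₙ) ∈ Sⁿ⁻¹, the limit f₀⁺(y) := lim_{m→∞} f(2^{-m}, y₂,…,yₙ) exists; moreover f₀⁺ equals (almost everywhere) the indicator of the relative interior of T ∩ H if T has interior points with nonnegative first coordinate, and equals 0 otherwise. -/

import Mathlib

/-!
Write `e₀` for the first basis vector. For `x` with `x 0 = 0` we have
`⟪c, x + t • e₀⟫ = ⟪c, x⟫ + t * c 0`, whose sign for small `t > 0` is the lexicographic sign of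
`(⟪c, x⟫, c 0)`. So `f (x + t • e₀)` is eventually constant as `t ↓ 0`, for every `x`, equal to
the indicator of `lexInterior C e₀`.

For `c ∉ ℝ ∙ e₀` the set `{x ∈ S ∩ H | ⟪c, x⟫ = 0}` is a great sphere of dimension `n - 2`,
hence `μH[n-1]`-null. Off these finitely many null sets, the constraints vanishing at `x` are
exactly the multiples of `e₀` in `C`; then `x ∈ lexInterior C e₀` says that the other constraints
are positive at `x` (i.e. `x` is in the relative interior of `T ∩ H`) and that the multiples of
`e₀` are positive ones, which, given the former, amounts to `T` having relative interior points
with `z 0 ≥ 0`.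
-/

open Set Metric Filter MeasureTheory
open scoped RealInnerProductSpace Topology Classical

noncomputable section

abbrev Euc (n : ℕ) : Type := EuclideanSpace ℝ (Fin n)

def unitSphere (n : ℕ) : Set (Euc n) := Metric.sphere 0 1

/-- The relative interior of `A` within the ambient set `S`. -/
def relIntIn {n : ℕ} (A S : Set (Euc n)) : Set (Euc n) :=
  {x | x ∈ A ∧ ∃ ε > 0, ∀ y ∈ S, dist y x < ε → y ∈ A}

section PolyhedralCone

variable {E : Type*} [NormedAddCommGroup E] [InnerProductSpace ℝ E]

def polyhedralCone (C : Finset E) : Set E := ⋂ c ∈ C, {y | 0 ≤ ⟪c, y⟫}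

def lexInterior (C : Finset E) (v : E) : Set E :=
  {x | ∀ c ∈ C, c ≠ 0 → 0 < ⟪c, x⟫ ∨ ⟪c, x⟫ = 0 ∧ 0 < ⟪c, v⟫}

lemma mem_polyhedralCone {C : Finset E} {y : E} :
    y ∈ polyhedralCone C ↔ ∀ c ∈ C, 0 ≤ ⟪c, y⟫ :=
  mem_iInter₂

lemma tendsto_add_smul_nhdsGT (x v : E) :
    Tendsto (fun t : ℝ => x + t • v) (𝓝[>] 0) (𝓝 x) :=
  tendsto_nhdsWithin_of_tendsto_nhds ((by fun_prop : Continuous fun t : ℝ => x + t • v).tendsto' 0 x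
    (by simp))

lemma interior_polyhedralCone (C : Finset E) :
    interior (polyhedralCone C) = {y | ∀ c ∈ C, c ≠ 0 → 0 < ⟪c, y⟫} := by
  apply subset_antisymm
  · intro y hy c hc hc0
    obtain ⟨δ, hmem, hδ⟩ : ∃ δ : ℝ, y + δ • (-c) ∈ polyhedralCone C ∧ 0 < δ :=
      (((tendsto_add_smul_nhdsGT y (-c)).eventually (mem_interior_iff_mem_nhds.1 hy)).and
        self_mem_nhdsWithin).exists
    have := mem_polyhedralCone.1 hmem c hc
    rw [inner_add_right, real_inner_smul_right, inner_neg_right, real_inner_self_eq_norm_sq] at this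
    have : 0 < δ * ‖c‖ ^ 2 := by positivity
    linarith
  · refine interior_maximal (fun y hy => mem_polyhedralCone.2 fun c hc => ?_) ?_
    · rcases eq_or_ne c 0 with rfl | h
      · simp
      · exact (hy c hc h).le
    · simp only [ofPred_forall]
      refine isOpen_biInter_finset fun c _ => isOpen_iInter_of_finite fun _ => ?_
      exact isOpen_lt continuous_const (continuous_const.inner continuous_id)

lemma eventually_pos_add_mul_iff (a b : ℝ) :
    ∀ᶠ t in 𝓝[>] 0, 0 < a + t * b ↔ 0 < a ∨ a = 0 ∧ 0 < b := by
  have hlim : Tendsto (fun t : ℝ => a + t * b) (𝓝[>] 0) (𝓝 a) := by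
    simpa using tendsto_add_smul_nhdsGT a b
  rcases lt_trichotomy a 0 with ha | rfl | ha
  · filter_upwards [hlim.eventually (eventually_lt_nhds ha)] with t ht
    constructor
    · intro h; linarith
    · rintro (h | ⟨h, _⟩) <;> linarith
  · filter_upwards [self_mem_nhdsWithin] with t (ht : 0 < t)
    simp [mul_pos_iff_of_pos_left ht]
  · filter_upwards [hlim.eventually (eventually_gt_nhds ha)] with t ht
    simp [ht, ha]

lemma eventually_add_smul_mem_interior_iff (C : Finset E) (x v : E) :
    ∀ᶠ t in 𝓝[>] (0 : ℝ), x + t • v ∈ interior (polyhedralCone C) ↔ x ∈ lexInterior C v := by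
  have : ∀ᶠ t in 𝓝[>] (0 : ℝ), ∀ c ∈ C,
      (0 < ⟪c, x + t • v⟫ ↔ 0 < ⟪c, x⟫ ∨ ⟪c, x⟫ = 0 ∧ 0 < ⟪c, v⟫) := by
    rw [eventually_all_finset]
    intro c _
    simpa only [inner_add_right, real_inner_smul_right] using
      eventually_pos_add_mul_iff ⟪c, x⟫ ⟪c, v⟫
  filter_upwards [this] with t ht
  simp only [interior_polyhedralCone, lexInterior, mem_ofPred_eq]
  exact forall₂_congr fun c hc => imp_congr_right fun _ => ht c hc

lemma tendsto_indicator_interior_polyhedralCone {ι : Type*} {l : Filter ι} {t : ι → ℝ}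
    (ht : Tendsto t l (𝓝[>] 0)) (C : Finset E) (x v : E) :
    Tendsto (fun i => (interior (polyhedralCone C)).indicator (fun _ => (1 : ℝ)) (x + t i • v)) l
      (𝓝 ((lexInterior C v).indicator (fun _ => 1) x)) := by
  refine tendsto_const_nhds.congr' ?_
  filter_upwards [ht.eventually (eventually_add_smul_mem_interior_iff C x v)] with i hi
  simp only [indicator, hi]

lemma inner_eq_zero_of_mem_span_singleton {u c y : E} (hc : c ∈ ℝ ∙ u) (hy : ⟪u, y⟫ = 0) :
    ⟪c, y⟫ = 0 := by
  obtain ⟨a, rfl⟩ := Submodule.mem_span_singleton.1 hc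
  rw [real_inner_smul_left, hy, mul_zero]

end PolyhedralCone

section Sphere

variable {n : ℕ}

lemma relIntIn_sphere_inter_eq {K : Set (Euc n)} (hK : ∀ a : ℝ, 0 < a → ∀ y ∈ K, a • y ∈ K) :
    relIntIn (unitSphere n ∩ K) (unitSphere n) = unitSphere n ∩ interior K := by
  apply subset_antisymm
  · rintro x ⟨⟨hxS, -⟩, ε, hε, hball⟩
    have hx0 : x ≠ 0 := ne_zero_of_mem_unit_sphere ⟨x, hxS⟩
    refine ⟨hxS, mem_interior_iff_mem_nhds.2 ?_⟩
    have hx1 : ‖x‖ = 1 := mem_sphere_zero_iff_norm.1 hxS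
    have hcont : Tendsto (fun y : Euc n => ‖y‖⁻¹ • y) (𝓝 x) (𝓝 x) := by
      simpa [hx1] using ((continuous_norm.tendsto x).inv₀ (by simp [hx1])).smul tendsto_id
    filter_upwards [eventually_ne_nhds hx0, hcont.eventually (ball_mem_nhds _ hε)] with y hy0 hy
    have hyS : ‖y‖⁻¹ • y ∈ unitSphere n := mem_sphere_zero_iff_norm.2 (norm_smul_inv_norm hy0)
    simpa [smul_inv_smul₀ (norm_ne_zero_iff.2 hy0)] using
      hK ‖y‖ (norm_pos_iff.2 hy0) _ (hball _ hyS hy).2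
  · rintro x ⟨hxS, hxK⟩
    obtain ⟨ε, hε, hball⟩ := Metric.isOpen_iff.1 isOpen_interior x hxK
    exact ⟨⟨hxS, interior_subset hxK⟩, ε, hε, fun y hyS hy =>
      ⟨hyS, interior_subset (hball (mem_ball.2 hy))⟩⟩

lemma relIntIn_sphere_inter_polyhedralCone (C : Finset (Euc n)) :
    relIntIn (unitSphere n ∩ polyhedralCone C) (unitSphere n) =
      unitSphere n ∩ interior (polyhedralCone C) := by
  refine relIntIn_sphere_inter_eq fun a ha y hy => mem_polyhedralCone.2 fun c hc => ?_
  rw [real_inner_smul_right]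
  exact mul_nonneg ha.le (mem_polyhedralCone.1 hy c hc)

variable {C : Finset (Euc n)} {u x : Euc n}

lemma exists_mem_relIntIn_of_mem_lexInterior (hxS : x ∈ unitSphere n) (hxu : ⟪u, x⟫ = 0)
    (hx : x ∈ lexInterior C u) :
    ∃ z ∈ relIntIn (unitSphere n ∩ polyhedralCone C) (unitSphere n), 0 ≤ ⟪u, z⟫ := by
  obtain ⟨t, hint, ht⟩ : ∃ t : ℝ, x + t • u ∈ interior (polyhedralCone C) ∧ 0 < t :=
    ((eventually_add_smul_mem_interior_iff C x u).and self_mem_nhdsWithin).exists.imp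
      fun t h => ⟨h.1.2 hx, h.2⟩
  set w := x + t • u
  have hw0 : w ≠ 0 := by
    intro h
    have : ⟪x, w⟫ = 1 := by
      rw [inner_add_right, real_inner_smul_right, real_inner_comm u x, hxu,
        real_inner_self_eq_norm_sq, mem_sphere_zero_iff_norm.1 hxS]
      ring
    simp [h] at this
  refine ⟨‖w‖⁻¹ • w, ?_, ?_⟩
  · rw [relIntIn_sphere_inter_polyhedralCone]
    refine ⟨mem_sphere_zero_iff_norm.2 (norm_smul_inv_norm hw0), ?_⟩
    rw [interior_polyhedralCone] at hint ⊢
    intro c hc hc0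
    rw [real_inner_smul_right]
    exact mul_pos (inv_pos.2 (norm_pos_iff.2 hw0)) (hint c hc hc0)
  · rw [real_inner_smul_right, inner_add_right, real_inner_smul_right, hxu, zero_add,
      real_inner_self_eq_norm_sq]
    positivity

lemma mem_relIntIn_of_mem_lexInterior (hgen : ∀ c ∈ C, ⟪c, x⟫ = 0 → c ∈ ℝ ∙ u)
    (hxS : x ∈ unitSphere n) (hxu : ⟪u, x⟫ = 0) (hx : x ∈ lexInterior C u) :
    x ∈ relIntIn (unitSphere n ∩ polyhedralCone C ∩ {y | ⟪u, y⟫ = 0})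
      (unitSphere n ∩ {y | ⟪u, y⟫ = 0}) := by
  have hpos : ∀ᶠ y in 𝓝 x, ∀ c ∈ C, c ∉ ℝ ∙ u → 0 < ⟪c, y⟫ := by
    rw [eventually_all_finset]
    intro c hc
    by_cases hcu : c ∈ ℝ ∙ u
    · exact Eventually.of_forall fun _ h => absurd hcu h
    · have hc0 : c ≠ 0 := fun h => hcu (h ▸ Submodule.zero_mem _)
      have hcx : 0 < ⟪c, x⟫ := (hx c hc hc0).resolve_right fun h => hcu (hgen c hc h.1)
      filter_upwards [(continuous_const.inner continuous_id).continuousAt.eventually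
        (eventually_gt_nhds hcx)] with y hy _ using hy
  obtain ⟨ε, hε, hball⟩ := Metric.eventually_nhds_iff.1 hpos
  have hmem : ∀ y ∈ unitSphere n ∩ {y | ⟪u, y⟫ = 0}, dist y x < ε →
      y ∈ unitSphere n ∩ polyhedralCone C ∩ {y | ⟪u, y⟫ = 0} := by
    rintro y ⟨hyS, hyu⟩ hy
    refine ⟨⟨hyS, mem_polyhedralCone.2 fun c hc => ?_⟩, hyu⟩
    by_cases hcu : c ∈ ℝ ∙ u
    · exact (inner_eq_zero_of_mem_span_singleton hcu hyu).ge
    · exact (hball hy c hc hcu).le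
  exact ⟨hmem x ⟨hxS, hxu⟩ (by simpa using hε), ε, hε, hmem⟩

lemma mem_lexInterior_of_mem_polyhedralCone (hgen : ∀ c ∈ C, ⟪c, x⟫ = 0 → c ∈ ℝ ∙ u)
    (hP : ∃ z ∈ relIntIn (unitSphere n ∩ polyhedralCone C) (unitSphere n), 0 ≤ ⟪u, z⟫)
    (hx : x ∈ polyhedralCone C) : x ∈ lexInterior C u := by
  obtain ⟨z, hz, hzu⟩ := hP
  rw [relIntIn_sphere_inter_polyhedralCone, interior_polyhedralCone] at hz
  intro c hc hc0
  rcases (mem_polyhedralCone.1 hx c hc).lt_or_eq with hcx | hcx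
  · exact Or.inl hcx
  obtain ⟨a, rfl⟩ := Submodule.mem_span_singleton.1 (hgen c hc hcx.symm)
  have hcz := hz.2 _ hc hc0
  rw [real_inner_smul_left] at hcz
  have ha : 0 < a := pos_of_mul_pos_left hcz hzu
  have hu : u ≠ 0 := by rintro rfl; simp at hcz
  refine Or.inr ⟨hcx.symm, ?_⟩
  rw [real_inner_smul_left, real_inner_self_eq_norm_sq]
  have := norm_pos_iff.2 hu
  positivity

lemma mem_lexInterior_iff (hgen : ∀ c ∈ C, ⟪c, x⟫ = 0 → c ∈ ℝ ∙ u)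
    (hxS : x ∈ unitSphere n) (hxu : ⟪u, x⟫ = 0) :
    x ∈ lexInterior C u ↔
      (∃ z ∈ relIntIn (unitSphere n ∩ polyhedralCone C) (unitSphere n), 0 ≤ ⟪u, z⟫) ∧
        x ∈ relIntIn (unitSphere n ∩ polyhedralCone C ∩ {y | ⟪u, y⟫ = 0})
          (unitSphere n ∩ {y | ⟪u, y⟫ = 0}) :=
  ⟨fun hx => ⟨exists_mem_relIntIn_of_mem_lexInterior hxS hxu hx,
      mem_relIntIn_of_mem_lexInterior hgen hxS hxu hx⟩,
    fun ⟨hP, hx⟩ => mem_lexInterior_of_mem_polyhedralCone hgen hP hx.1.1.2⟩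

end Sphere

section NullSet

open Module

variable {E : Type*} [NormedAddCommGroup E] [MeasurableSpace E] [BorelSpace E]

lemma hausdorffMeasure_coe_inter_sphere_eq_zero [NormedSpace ℝ E] (W : Submodule ℝ E)
    [FiniteDimensional ℝ W] {r : ℝ} (hr : r ≠ 0) :
    μH[finrank ℝ W] ((W : Set E) ∩ sphere 0 r) = 0 := by
  have : (W : Set E) ∩ sphere 0 r = (↑) '' sphere (0 : W) r := by
    ext x
    constructor
    · rintro ⟨hxW, hx⟩
      exact ⟨⟨x, hxW⟩, by simpa using hx, rfl⟩
    · rintro ⟨y, hy, rfl⟩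
      exact ⟨y.2, by simpa using hy⟩
  rw [this, isometry_subtype_coe.hausdorffMeasure_image (Or.inl (Nat.cast_nonneg _))]
  exact Measure.addHaar_sphere_of_ne_zero _ 0 hr

variable [InnerProductSpace ℝ E] [FiniteDimensional ℝ E]

lemma hausdorffMeasure_sphere_inter_orthogonal_pair_eq_zero {u c : E} (hu : u ≠ 0)
    (hc : c ∉ ℝ ∙ u) :
    μH[(finrank ℝ E : ℝ) - 2] (sphere 0 1 ∩ {x | ⟪u, x⟫ = 0 ∧ ⟪c, x⟫ = 0}) = 0 := by
  set W := (Submodule.span ℝ {u, c})ᗮ with hWdef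
  have hspan : finrank ℝ (Submodule.span ℝ {u, c}) = 2 := by
    have hli : LinearIndependent ℝ ![u, c] :=
      (LinearIndependent.pair_iff' hu).2 fun a h => hc (Submodule.mem_span_singleton.2 ⟨a, h⟩)
    rw [← Matrix.range_cons_cons_empty u c ![], finrank_span_eq_card hli, Fintype.card_fin]
  have hW : ((finrank ℝ E : ℝ) - 2) = (finrank ℝ W : ℝ) := by
    have := (Submodule.span ℝ {u, c}).finrank_add_finrank_orthogonal
    rw [hspan] at this
    rw [← this]
    push_cast
    ring
  have hsub : sphere 0 1 ∩ {x | ⟪u, x⟫ = 0 ∧ ⟪c, x⟫ = 0} ⊆ (W : Set E) ∩ sphere 0 1 := by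
    rintro x ⟨hx, hux, hcx⟩
    refine ⟨?_, hx⟩
    rw [SetLike.mem_coe, hWdef, Submodule.span_insert, ← Submodule.inf_orthogonal,
      Submodule.mem_inf, Submodule.mem_orthogonal_singleton_iff_inner_right,
      Submodule.mem_orthogonal_singleton_iff_inner_right]
    exact ⟨hux, hcx⟩
  rw [hW]
  exact measure_mono_null hsub (hausdorffMeasure_coe_inter_sphere_eq_zero W one_ne_zero)

lemma ae_mem_span_singleton_of_inner_eq_zero (C : Finset E) {u : E} (hu : u ≠ 0) :
    ∀ᵐ x ∂(μH[(finrank ℝ E : ℝ) - 2] : Measure E), x ∈ sphere 0 1 → ⟪u, x⟫ = 0 →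
      ∀ c ∈ C, ⟪c, x⟫ = 0 → c ∈ ℝ ∙ u := by
  have : ∀ᵐ x ∂(μH[(finrank ℝ E : ℝ) - 2] : Measure E), ∀ c ∈ C,
      x ∈ sphere 0 1 → ⟪u, x⟫ = 0 → ⟪c, x⟫ = 0 → c ∈ ℝ ∙ u := by
    rw [eventually_all_finset]
    intro c _
    by_cases hc : c ∈ ℝ ∙ u
    · exact Eventually.of_forall fun _ _ _ _ => hc
    · filter_upwards [measure_eq_zero_iff_ae_notMem.1
        (hausdorffMeasure_sphere_inter_orthogonal_pair_eq_zero hu hc)] with x hx hxS hux hcx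
      exact absurd ⟨hxS, hux, hcx⟩ hx
  filter_upwards [this] with x hx hxS hux c hc using hx c hc hxS hux

end NullSet

lemma tendsto_half_pow_nhdsGT : Tendsto (fun m : ℕ => ((1 : ℝ) / 2) ^ m) atTop (𝓝[>] 0) :=
  tendsto_nhdsWithin_iff.2 ⟨tendsto_pow_atTop_nhds_zero_of_lt_one (by norm_num) (by norm_num),
    Eventually.of_forall fun m => pow_pos (by norm_num : (0 : ℝ) < 1 / 2) m⟩

theorem indicator_one_sided_limit (n : ℕ) (C : Finset (Euc (n + 1)))
    (K T H : Set (Euc (n + 1)))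
    (hK : K = ⋂ c ∈ C, {y : Euc (n + 1) | 0 ≤ ⟪c, y⟫})
    (hT : T = unitSphere (n + 1) ∩ K)
    (hH : H = {y : Euc (n + 1) | y 0 = 0})
    (f : Euc (n + 1) → ℝ) (hf : f = Set.indicator (interior K) (fun _ => (1 : ℝ))) :
    ∀ᵐ x ∂(μH[((n : ℝ) - 1)] : Measure (Euc (n + 1))),
      x ∈ unitSphere (n + 1) ∩ H →
        Tendsto (fun m : ℕ => f (x + ((1 : ℝ) / 2) ^ m • EuclideanSpace.single (0 : Fin (n + 1)) (1 : ℝ)))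
          atTop
          (𝓝 (if ∃ z ∈ relIntIn T (unitSphere (n + 1)), 0 ≤ z 0 then
                Set.indicator (relIntIn (T ∩ H) (unitSphere (n + 1) ∩ H)) (fun _ => (1 : ℝ)) x
              else 0)) := by
  set e₀ : Euc (n + 1) := EuclideanSpace.single 0 1
  have hcoord : ∀ y : Euc (n + 1), y 0 = ⟪e₀, y⟫ := fun y => by
    simp [e₀, EuclideanSpace.inner_single_left]
  have hdim : (n : ℝ) - 1 = (Module.finrank ℝ (Euc (n + 1)) : ℝ) - 2 := by simp; ring
  have hK' : K = polyhedralCone C := hK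
  subst hT hH hf
  simp only [hcoord, hK', hdim]
  filter_upwards [ae_mem_span_singleton_of_inner_eq_zero C (u := e₀) (by simp [e₀])]
    with x hgen ⟨hxS, hxu⟩
  convert tendsto_indicator_interior_polyhedralCone tendsto_half_pow_nhdsGT C x e₀ using 2
  have hlex := mem_lexInterior_iff (hgen hxS hxu) hxS hxu
  split_ifs with hP <;> simp [indicator, hP, hlex]
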